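/- For a general linear quantum system there exist nonnegative integers n_a, n_b and matrices X ∈ ℂ^{n×n_a}, Y ∈ ℂ^{n×n_b} with Xᴴ X = I_{n_a}, Yᴴ Y = I_{n_b} and Xᴴ Y = 0, such that the column space of T_cō := (1/√2)·[X Y; conj(X) -conj(Y)] ∈ ℂ^{2n×(n_a+n_b)} equals R_cō := Im(C_G) ∩ Ker(O_G), and the column space of J_n T_cō = (1/√2)·[X Y; -conj(X) conj(Y)] equals R_c̄o := Ker(C_Gᴴ) ∩ Im(O_Gᴴ). -/

import Mathlib

open Matrix

noncomputable section

/-- `J_k = [I 0; 0 -I]` acting on `ℂ^{2k} = ℂ^k ⊕ ℂ^k`. -/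
def Jmat (k : ℕ) : Matrix (Fin k ⊕ Fin k) (Fin k ⊕ Fin k) ℂ :=
  Matrix.fromBlocks 1 0 0 (-1)

/-- Entrywise complex conjugation of a matrix. -/
def mconj {α β : Type} (M : Matrix α β ℂ) : Matrix α β ℂ :=
  M.map (starRingEnd ℂ)

/-- The doubled-up matrix `Δ(U,V) = [U V; conj V  conj U]`. -/
def doubledUp {k r : ℕ} (U V : Matrix (Fin k) (Fin r) ℂ) :
    Matrix (Fin k ⊕ Fin k) (Fin r ⊕ Fin r) ℂ :=
  Matrix.fromBlocks U V (mconj V) (mconj U)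

/-- The ♭-adjoint `X♭ = J_r Xᴴ J_k` of `X ∈ ℂ^{2k×2r}`. -/
def flat {k r : ℕ} (X : Matrix (Fin k ⊕ Fin k) (Fin r ⊕ Fin r) ℂ) :
    Matrix (Fin r ⊕ Fin r) (Fin k ⊕ Fin k) ℂ :=
  Jmat r * Xᴴ * Jmat k

/-- Orthogonal complement of a subspace of `ℂ^ι` w.r.t. the standard Hermitian
inner product `⟪y, x⟫ = (star y) ⬝ᵥ x`. -/
def orthComp {ι : Type} [Fintype ι] (S : Submodule ℂ (ι → ℂ)) : Submodule ℂ (ι → ℂ) where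
  carrier := {x | ∀ y ∈ S, star y ⬝ᵥ x = 0}
  add_mem' := by
    intro a b ha hb y hy
    simp only [Set.mem_setOf_eq] at *
    rw [dotProduct_add, ha y hy, hb y hy, add_zero]
  zero_mem' := by
    intro y hy
    simp
  smul_mem' := by
    intro c x hx y hy
    simp only [Set.mem_setOf_eq] at *
    rw [dotProduct_smul, hx y hy, smul_zero]

/-- The controllable subspace `Im(C_G) = ∑_{k<2n} Im(𝒜ᵏℬ)`. -/
def ctrbSub (n m : ℕ) (𝒜 : Matrix (Fin n ⊕ Fin n) (Fin n ⊕ Fin n) ℂ)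
    (ℬ : Matrix (Fin n ⊕ Fin n) (Fin m ⊕ Fin m) ℂ) : Submodule ℂ (Fin n ⊕ Fin n → ℂ) :=
  ⨆ k ∈ Finset.range (2 * n), LinearMap.range ((𝒜 ^ k * ℬ).mulVecLin)

/-- The unobservable subspace `Ker(O_G) = ⋂_{k<2n} Ker(𝒞𝒜ᵏ)`. -/
def unobsSub (n m : ℕ) (𝒜 : Matrix (Fin n ⊕ Fin n) (Fin n ⊕ Fin n) ℂ)
    (𝒞 : Matrix (Fin m ⊕ Fin m) (Fin n ⊕ Fin n) ℂ) : Submodule ℂ (Fin n ⊕ Fin n → ℂ) :=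
  ⨅ k ∈ Finset.range (2 * n), LinearMap.ker ((𝒞 * 𝒜 ^ k).mulVecLin)

/-!
Physical realizability `𝒜 + 𝒜♭ + 𝒞♭𝒞 = 0` says that `𝒜♭ = -𝒜 + ℬ𝒞` is an output injection
of `-𝒜`, which leaves the unobservable subspace unchanged. Taking adjoints, with
`(𝒜ᵏℬ)ᴴ = -J (𝒞 (𝒜♭)ᵏ) J`, gives the dualities `Im(C_G)^⊥ = J Ker(O_G)` and
`Ker(O_G)^⊥ = J Im(C_G)`. Hence `R_c̄o = J R_cō`, and `R_cō ⊥ J R_cō`.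

All system matrices are doubled-up, so they commute with the antilinear involution
`σ (x, y) = (ȳ, x̄)`, and `R_cō` is `σ`-stable, hence spanned by `σ`-fixed vectors `(a, ā)`.
For those, `⟨(a, ā), J (b, b̄)⟩ = 2i Im(aᴴb)` vanishes, so a real orthonormal basis of
`{a | (a, ā) ∈ R_cō}` is Hermitian-orthonormal; its members are the columns of `X`, and `Y` is empty.
-/

section Flat

variable {k r s : ℕ}

@[simp]
lemma Jmat_mul_Jmat : Jmat k * Jmat k = 1 := by
  simp [Jmat, fromBlocks_multiply, fromBlocks_one]

@[simp]
lemma conjTranspose_Jmat : (Jmat k)ᴴ = Jmat k := by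
  simp [Jmat, fromBlocks_conjTranspose]

lemma Jmat_mem_unitaryGroup : Jmat k ∈ unitaryGroup (Fin k ⊕ Fin k) ℂ := by
  rw [mem_unitaryGroup_iff, star_eq_conjTranspose, conjTranspose_Jmat, Jmat_mul_Jmat]

@[simp]
lemma Jmat_mul_Jmat_mul {ι : Type} (M : Matrix (Fin k ⊕ Fin k) ι ℂ) :
    Jmat k * (Jmat k * M) = M := by
  rw [← Matrix.mul_assoc, Jmat_mul_Jmat, Matrix.one_mul]

lemma Jmat_mul_flat_mul_Jmat (X : Matrix (Fin k ⊕ Fin k) (Fin r ⊕ Fin r) ℂ) :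
    Jmat r * flat X * Jmat k = Xᴴ := by
  simp [flat, Matrix.mul_assoc]

@[simp]
lemma flat_flat (X : Matrix (Fin k ⊕ Fin k) (Fin r ⊕ Fin r) ℂ) : flat (flat X) = X := by
  simp [flat, conjTranspose_mul, Matrix.mul_assoc]

lemma flat_mul (X : Matrix (Fin k ⊕ Fin k) (Fin r ⊕ Fin r) ℂ)
    (Y : Matrix (Fin r ⊕ Fin r) (Fin s ⊕ Fin s) ℂ) : flat (X * Y) = flat Y * flat X := by
  simp [flat, conjTranspose_mul, Matrix.mul_assoc]

lemma flat_smul (c : ℂ) (X : Matrix (Fin k ⊕ Fin k) (Fin r ⊕ Fin r) ℂ) :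
    flat (c • X) = star c • flat X := by
  simp [flat, conjTranspose_smul]

lemma flat_sub (X Y : Matrix (Fin k ⊕ Fin k) (Fin r ⊕ Fin r) ℂ) :
    flat (X - Y) = flat X - flat Y := by
  simp [flat, conjTranspose_sub, Matrix.mul_sub, Matrix.sub_mul]

lemma flat_neg (X : Matrix (Fin k ⊕ Fin k) (Fin r ⊕ Fin r) ℂ) : flat (-X) = -flat X := by
  simp [flat]

@[simp]
lemma flat_one : flat (1 : Matrix (Fin k ⊕ Fin k) (Fin k ⊕ Fin k) ℂ) = 1 := by
  simp [flat]

lemma flat_pow (A : Matrix (Fin k ⊕ Fin k) (Fin k ⊕ Fin k) ℂ) (p : ℕ) :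
    flat (A ^ p) = flat A ^ p := by
  induction p with
  | zero => simp
  | succ p ih => rw [pow_succ, flat_mul, ih, pow_succ']

@[simp]
lemma flat_Jmat : flat (Jmat k) = Jmat k := by
  simp [flat]

lemma flat_of_isHermitian {Ω : Matrix (Fin k ⊕ Fin k) (Fin k ⊕ Fin k) ℂ} (hΩ : Ω.IsHermitian) :
    flat Ω = Jmat k * Ω * Jmat k := by
  rw [flat, hΩ.eq]

end Flat

lemma add_flat_add_flat_mul_eq_zero {n m : ℕ} {Ω : Matrix (Fin n ⊕ Fin n) (Fin n ⊕ Fin n) ℂ}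
    (hΩ : Ω.IsHermitian) {C : Matrix (Fin m ⊕ Fin m) (Fin n ⊕ Fin n) ℂ}
    {A : Matrix (Fin n ⊕ Fin n) (Fin n ⊕ Fin n) ℂ}
    (hA : A = (-Complex.I) • (Jmat n * Ω) - (1 / 2 : ℂ) • (flat C * C)) :
    A + flat A + flat C * C = 0 := by
  subst hA
  have hJΩJJ : Jmat n * Ω * Jmat n * Jmat n = Jmat n * Ω := by
    rw [Matrix.mul_assoc _ (Jmat n), Jmat_mul_Jmat, Matrix.mul_one]
  have hhalf : star (1 / 2 : ℂ) = 1 / 2 := by simp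
  simp only [flat_sub, flat_smul, flat_mul, flat_flat, flat_Jmat, flat_of_isHermitian hΩ, hJΩJJ,
    hhalf, star_neg, Complex.star_def, Complex.conj_I]
  module

section JmatEntries

variable {k r : ℕ}

@[simp]
lemma Jmat_mul_apply_inl (M : Matrix (Fin k ⊕ Fin k) (Fin r ⊕ Fin r) ℂ) (i : Fin k)
    (j : Fin r ⊕ Fin r) : (Jmat k * M) (Sum.inl i) j = M (Sum.inl i) j := by
  simp [Jmat, Matrix.mul_apply, fromBlocks, Fintype.sum_sum_type, one_apply]

@[simp]
lemma Jmat_mul_apply_inr (M : Matrix (Fin k ⊕ Fin k) (Fin r ⊕ Fin r) ℂ) (i : Fin k)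
    (j : Fin r ⊕ Fin r) : (Jmat k * M) (Sum.inr i) j = -M (Sum.inr i) j := by
  simp [Jmat, Matrix.mul_apply, fromBlocks, Fintype.sum_sum_type, one_apply]

@[simp]
lemma mul_Jmat_apply_inl (M : Matrix (Fin k ⊕ Fin k) (Fin r ⊕ Fin r) ℂ) (i : Fin k ⊕ Fin k)
    (j : Fin r) : (M * Jmat r) i (Sum.inl j) = M i (Sum.inl j) := by
  simp [Jmat, Matrix.mul_apply, fromBlocks, Fintype.sum_sum_type, one_apply]

@[simp]
lemma mul_Jmat_apply_inr (M : Matrix (Fin k ⊕ Fin k) (Fin r ⊕ Fin r) ℂ) (i : Fin k ⊕ Fin k)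
    (j : Fin r) : (M * Jmat r) i (Sum.inr j) = -M i (Sum.inr j) := by
  simp [Jmat, Matrix.mul_apply, fromBlocks, Fintype.sum_sum_type, one_apply]

@[simp]
lemma Jmat_mulVec_inl (v : Fin k ⊕ Fin k → ℂ) (i : Fin k) :
    (Jmat k *ᵥ v) (Sum.inl i) = v (Sum.inl i) := by
  simp [Jmat, mulVec, dotProduct, fromBlocks, Fintype.sum_sum_type, one_apply]

@[simp]
lemma Jmat_mulVec_inr (v : Fin k ⊕ Fin k → ℂ) (i : Fin k) :
    (Jmat k *ᵥ v) (Sum.inr i) = -v (Sum.inr i) := by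
  simp [Jmat, mulVec, dotProduct, fromBlocks, Fintype.sum_sum_type, one_apply]

end JmatEntries

section OrthComp

variable {ι κ : Type} [Fintype ι] [Fintype κ]

lemma mem_orthComp {S : Submodule ℂ (ι → ℂ)} {x : ι → ℂ} :
    x ∈ orthComp S ↔ ∀ y ∈ S, star y ⬝ᵥ x = 0 :=
  Iff.rfl

lemma orthComp_eq_comap_orthogonal (S : Submodule ℂ (ι → ℂ)) :
    orthComp S = ((S.map (WithLp.linearEquiv 2 ℂ (ι → ℂ)).symm.toLinearMap)ᗮ).comap
      (WithLp.linearEquiv 2 ℂ (ι → ℂ)).symm.toLinearMap := by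
  ext x
  refine ⟨fun h _ ⟨y, hy, hu⟩ => ?_, fun h y hy => ?_⟩
  · rw [← hu]
    simpa [EuclideanSpace.inner_toLp_toLp, dotProduct_comm] using h y hy
  · simpa [EuclideanSpace.inner_toLp_toLp, dotProduct_comm] using h _ ⟨y, hy, rfl⟩

lemma orthComp_orthComp (S : Submodule ℂ (ι → ℂ)) : orthComp (orthComp S) = S := by
  let e := (WithLp.linearEquiv 2 ℂ (ι → ℂ)).symm
  rw [orthComp_eq_comap_orthogonal, orthComp_eq_comap_orthogonal,
    Submodule.map_comap_eq_of_surjective e.surjective, Submodule.orthogonal_orthogonal]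
  exact Submodule.comap_map_eq_of_injective e.injective S

lemma orthComp_iSup {η : Sort*} (P : η → Submodule ℂ (ι → ℂ)) :
    orthComp (⨆ i, P i) = ⨅ i, orthComp (P i) := by
  simp_rw [orthComp_eq_comap_orthogonal, Submodule.map_iSup, ← Submodule.comap_iInf]
  exact congrArg _ (Submodule.orthogonal_gc ℂ _).l_iSup

open scoped ComplexOrder in
lemma orthComp_range_mulVecLin (M : Matrix ι κ ℂ) :
    orthComp (LinearMap.range M.mulVecLin) = LinearMap.ker Mᴴ.mulVecLin := by
  ext x
  simp only [mem_orthComp, LinearMap.mem_range, mulVecLin_apply, forall_exists_index,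
    forall_apply_eq_imp_iff, LinearMap.mem_ker, star_mulVec, ← dotProduct_mulVec]
  exact ⟨fun h => dotProduct_star_self_eq_zero.mp (h _), fun h v => by rw [h, dotProduct_zero]⟩

lemma orthComp_comap_unitary [DecidableEq ι] {U : Matrix ι ι ℂ} (hU : U ∈ unitaryGroup ι ℂ)
    (S : Submodule ℂ (ι → ℂ)) :
    orthComp (S.comap U.mulVecLin) = (orthComp S).comap U.mulVecLin := by
  ext x
  have hUU : Uᴴ * U = 1 := mem_unitaryGroup_iff'.mp hU
  have hUU' : U * Uᴴ = 1 := mem_unitaryGroup_iff.mp hU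
  have hdot (y : ι → ℂ) : star (U *ᵥ y) ⬝ᵥ (U *ᵥ x) = star y ⬝ᵥ x := by
    rw [star_mulVec, ← dotProduct_mulVec, mulVec_mulVec, hUU, one_mulVec]
  simp only [mem_orthComp, Submodule.mem_comap, mulVecLin_apply]
  refine ⟨fun h z hz => ?_, fun h y hy => by rw [← hdot]; exact h _ hy⟩
  have := h (Uᴴ *ᵥ z) (by rwa [mulVec_mulVec, hUU', one_mulVec])
  rwa [← hdot, mulVec_mulVec, hUU', one_mulVec] at this

end OrthComp

section Duality

variable {n m : ℕ}

lemma mem_unobsSub {A : Matrix (Fin n ⊕ Fin n) (Fin n ⊕ Fin n) ℂ}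
    {C : Matrix (Fin m ⊕ Fin m) (Fin n ⊕ Fin n) ℂ} {x : Fin n ⊕ Fin n → ℂ} :
    x ∈ unobsSub n m A C ↔ ∀ k < 2 * n, (C * A ^ k) *ᵥ x = 0 := by
  simp [unobsSub, Submodule.mem_iInf]

lemma unobsSub_le_smul_add_mul (c : ℂ) (A : Matrix (Fin n ⊕ Fin n) (Fin n ⊕ Fin n) ℂ)
    (D : Matrix (Fin n ⊕ Fin n) (Fin m ⊕ Fin m) ℂ) (C : Matrix (Fin m ⊕ Fin m) (Fin n ⊕ Fin n) ℂ) :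
    unobsSub n m A C ≤ unobsSub n m (c • A + D * C) C := by
  intro x hx
  rw [mem_unobsSub] at hx ⊢
  have hpow : ∀ k < 2 * n, (c • A + D * C) ^ k *ᵥ x = c ^ k • (A ^ k *ᵥ x) := by
    intro k
    induction k with
    | zero => simp
    | succ k ih =>
      intro hk
      have hCk : C *ᵥ (A ^ k *ᵥ x) = 0 := by rw [mulVec_mulVec]; exact hx k (by omega)
      rw [pow_succ' (c • A + D * C), ← mulVec_mulVec, ih (by omega), mulVec_smul, add_mulVec,
        ← mulVec_mulVec _ D, hCk, mulVec_zero, add_zero, smul_mulVec, mulVec_mulVec,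
        ← pow_succ', smul_smul, ← pow_succ]
  intro k hk
  rw [← mulVec_mulVec, hpow k hk, mulVec_smul, mulVec_mulVec, hx k hk, smul_zero]

lemma unobsSub_smul_add_mul {c : ℂ} (hc : c ≠ 0) (A : Matrix (Fin n ⊕ Fin n) (Fin n ⊕ Fin n) ℂ)
    (D : Matrix (Fin n ⊕ Fin n) (Fin m ⊕ Fin m) ℂ) (C : Matrix (Fin m ⊕ Fin m) (Fin n ⊕ Fin n) ℂ) :
    unobsSub n m (c • A + D * C) C = unobsSub n m A C := by
  refine le_antisymm ?_ (unobsSub_le_smul_add_mul c A D C)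
  convert unobsSub_le_smul_add_mul c⁻¹ (c • A + D * C) (-(c⁻¹ • D)) C using 2
  rw [smul_add, smul_smul, inv_mul_cancel₀ hc, one_smul, Matrix.neg_mul, Matrix.smul_mul,
    add_neg_cancel_right]

lemma ker_Jmat_mul_mul_Jmat (M : Matrix (Fin m ⊕ Fin m) (Fin n ⊕ Fin n) ℂ) :
    LinearMap.ker (Jmat m * M * Jmat n).mulVecLin =
      (LinearMap.ker M.mulVecLin).comap (Jmat n).mulVecLin := by
  have hJ : LinearMap.ker (Jmat m).mulVecLin = ⊥ :=
    ker_mulVecLin_eq_bot_iff.mpr fun v hv => by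
      simpa [mulVec_mulVec] using congrArg (Jmat m *ᵥ ·) hv
  rw [mulVecLin_mul, mulVecLin_mul, LinearMap.ker_comp, LinearMap.ker_comp_of_ker_eq_bot _ hJ]

lemma orthComp_ctrbSub_neg_flat (A : Matrix (Fin n ⊕ Fin n) (Fin n ⊕ Fin n) ℂ)
    (C : Matrix (Fin m ⊕ Fin m) (Fin n ⊕ Fin n) ℂ) :
    orthComp (ctrbSub n m A (-flat C)) = (unobsSub n m (flat A) C).comap (Jmat n).mulVecLin := by
  have hadj (k : ℕ) : (A ^ k * -flat C)ᴴ = Jmat m * -(C * flat A ^ k) * Jmat n := by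
    rw [← Jmat_mul_flat_mul_Jmat, flat_mul, flat_neg, flat_flat, flat_pow, Matrix.neg_mul]
  simp_rw [ctrbSub, unobsSub, orthComp_iSup, orthComp_range_mulVecLin, hadj,
    ker_Jmat_mul_mul_Jmat, map_neg, LinearMap.ker_neg, Submodule.comap_iInf]

lemma comap_Jmat_comap_Jmat {k : ℕ} (S : Submodule ℂ (Fin k ⊕ Fin k → ℂ)) :
    (S.comap (Jmat k).mulVecLin).comap (Jmat k).mulVecLin = S := by
  rw [← Submodule.comap_comp, ← mulVecLin_mul, Jmat_mul_Jmat, mulVecLin_one, Submodule.comap_id]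

lemma map_Jmat_eq_comap {k : ℕ} (S : Submodule ℂ (Fin k ⊕ Fin k → ℂ)) :
    S.map (Jmat k).mulVecLin = S.comap (Jmat k).mulVecLin := by
  ext x
  simp only [Submodule.mem_map, Submodule.mem_comap, mulVecLin_apply]
  refine ⟨?_, fun hx => ⟨_, hx, by simp [mulVec_mulVec]⟩⟩
  rintro ⟨y, hy, rfl⟩
  simpa [mulVec_mulVec] using hy

variable {A : Matrix (Fin n ⊕ Fin n) (Fin n ⊕ Fin n) ℂ}
  {C : Matrix (Fin m ⊕ Fin m) (Fin n ⊕ Fin n) ℂ}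

lemma orthComp_ctrbSub (hA : A + flat A + flat C * C = 0) :
    orthComp (ctrbSub n m A (-flat C)) = (unobsSub n m A C).comap (Jmat n).mulVecLin := by
  have hflat : flat A = (-1 : ℂ) • A + -flat C * C := by
    rw [neg_one_smul, Matrix.neg_mul, ← sub_eq_zero, ← hA]
    abel
  rw [orthComp_ctrbSub_neg_flat, hflat, unobsSub_smul_add_mul (by norm_num)]

lemma orthComp_unobsSub (hA : A + flat A + flat C * C = 0) :
    orthComp (unobsSub n m A C) = (ctrbSub n m A (-flat C)).comap (Jmat n).mulVecLin := by
  have h := congrArg (·.comap (Jmat n).mulVecLin) (orthComp_ctrbSub hA)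
  simp only [comap_Jmat_comap_Jmat, ← orthComp_comap_unitary Jmat_mem_unitaryGroup] at h
  rw [← h, orthComp_orthComp]

lemma star_dotProduct_Jmat_mulVec_eq_zero (hA : A + flat A + flat C * C = 0)
    {u v : Fin n ⊕ Fin n → ℂ} (hu : u ∈ ctrbSub n m A (-flat C)) (hv : v ∈ unobsSub n m A C) :
    star u ⬝ᵥ (Jmat n *ᵥ v) = 0 := by
  have hJv : Jmat n *ᵥ v ∈ orthComp (ctrbSub n m A (-flat C)) := by
    simpa [orthComp_ctrbSub hA, mulVec_mulVec] using hv
  exact hJv u hu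

end Duality

section DoubledUp

variable {α β γ : Type}

-- `M = [P Q; Q̄ P̄]` for some blocks `P, Q`, the shape of `doubledUp P Q`
def IsDoubledUp (M : Matrix (α ⊕ α) (β ⊕ β) ℂ) : Prop :=
  M.submatrix (Equiv.sumComm α α) (Equiv.sumComm β β) = mconj M

lemma isDoubledUp_iff {M : Matrix (α ⊕ α) (β ⊕ β) ℂ} :
    IsDoubledUp M ↔ ∀ i j, M i.swap j.swap = star (M i j) := by
  simp [IsDoubledUp, mconj, ← Matrix.ext_iff]

lemma isDoubledUp_doubledUp {k r : ℕ} (U V : Matrix (Fin k) (Fin r) ℂ) :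
    IsDoubledUp (doubledUp U V) := by
  rw [isDoubledUp_iff]
  rintro (i | i) (j | j) <;> simp [doubledUp, mconj]

namespace IsDoubledUp

variable {M N : Matrix (α ⊕ α) (β ⊕ β) ℂ}

lemma mul [Fintype β] {N : Matrix (β ⊕ β) (γ ⊕ γ) ℂ} (hM : IsDoubledUp M)
    (hN : IsDoubledUp N) : IsDoubledUp (M * N) := by
  rw [IsDoubledUp, ← submatrix_mul_equiv M N _ (Equiv.sumComm β β), hM, hN, mconj, mconj, mconj,
    Matrix.map_mul]

lemma one [DecidableEq α] : IsDoubledUp (1 : Matrix (α ⊕ α) (α ⊕ α) ℂ) := by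
  rw [IsDoubledUp, submatrix_one_equiv, mconj, Matrix.map_one _ (map_zero _) (map_one _)]

lemma pow [Fintype α] [DecidableEq α] {A : Matrix (α ⊕ α) (α ⊕ α) ℂ} (hA : IsDoubledUp A)
    (p : ℕ) : IsDoubledUp (A ^ p) := by
  induction p with
  | zero => exact one
  | succ p ih => rw [pow_succ]; exact ih.mul hA

lemma neg (hM : IsDoubledUp M) : IsDoubledUp (-M) := by
  rw [isDoubledUp_iff] at *
  simp [hM]

lemma sub (hM : IsDoubledUp M) (hN : IsDoubledUp N) : IsDoubledUp (M - N) := by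
  rw [isDoubledUp_iff] at *
  simp [hM, hN]

lemma smul_of_star_eq {c : ℂ} (hc : star c = c) (hM : IsDoubledUp M) : IsDoubledUp (c • M) := by
  rw [isDoubledUp_iff] at *
  simp [hM, hc]

lemma conjTranspose (hM : IsDoubledUp M) : IsDoubledUp Mᴴ := by
  rw [isDoubledUp_iff] at *
  simp [hM]

variable {k r : ℕ} {X : Matrix (Fin k ⊕ Fin k) (Fin r ⊕ Fin r) ℂ}

lemma Jmat_mul_mul_Jmat (hX : IsDoubledUp X) : IsDoubledUp (Jmat k * X * Jmat r) := by
  rw [isDoubledUp_iff] at *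
  rintro (i | i) (j | j) <;> simp [← hX]

lemma flat (hX : IsDoubledUp X) : IsDoubledUp (flat X) :=
  hX.conjTranspose.Jmat_mul_mul_Jmat

lemma smul_Jmat_mul {c : ℂ} (hc : star c = -c) (hX : IsDoubledUp X) :
    IsDoubledUp (c • (Jmat k * X)) := by
  rw [isDoubledUp_iff] at *
  rintro (i | i) j <;> simp [← hX, hc]

end IsDoubledUp

def swapConj : (α ⊕ α → ℂ) →ₗ⋆[ℂ] (α ⊕ α → ℂ) where
  toFun x i := star (x i.swap)
  map_add' x y := by ext; simp
  map_smul' c x := by ext; simp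

@[simp]
lemma swapConj_apply (x : α ⊕ α → ℂ) (i : α ⊕ α) : swapConj x i = star (x i.swap) := rfl

@[simp]
lemma swapConj_swapConj (x : α ⊕ α → ℂ) : swapConj (swapConj x) = x := by
  ext i; simp

lemma IsDoubledUp.mulVec_swapConj [Fintype β] {M : Matrix (α ⊕ α) (β ⊕ β) ℂ}
    (hM : IsDoubledUp M) (x : β ⊕ β → ℂ) : M *ᵥ swapConj x = swapConj (M *ᵥ x) := by
  ext i
  rw [isDoubledUp_iff] at hM
  simp only [swapConj_apply, mulVec, dotProduct, star_sum, star_mul', ← hM, Sum.swap_swap]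
  exact Fintype.sum_equiv (Equiv.sumComm β β) _ _ fun j => by simp

end DoubledUp

section Invariance

variable {n m : ℕ} {A : Matrix (Fin n ⊕ Fin n) (Fin n ⊕ Fin n) ℂ}

lemma swapConj_mem_ctrbSub {B : Matrix (Fin n ⊕ Fin n) (Fin m ⊕ Fin m) ℂ}
    (hA : IsDoubledUp A) (hB : IsDoubledUp B) {x : Fin n ⊕ Fin n → ℂ}
    (hx : x ∈ ctrbSub n m A B) : swapConj x ∈ ctrbSub n m A B := by
  suffices ctrbSub n m A B ≤ (ctrbSub n m A B).comap swapConj from this hx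
  refine iSup₂_le fun k hk => ?_
  rintro _ ⟨v, rfl⟩
  exact le_iSup₂ (f := fun k (_ : k ∈ Finset.range (2 * n)) =>
    LinearMap.range (A ^ k * B).mulVecLin) k hk ⟨swapConj v, ((hA.pow k).mul hB).mulVec_swapConj v⟩

lemma swapConj_mem_unobsSub {C : Matrix (Fin m ⊕ Fin m) (Fin n ⊕ Fin n) ℂ}
    (hA : IsDoubledUp A) (hC : IsDoubledUp C) {x : Fin n ⊕ Fin n → ℂ}
    (hx : x ∈ unobsSub n m A C) : swapConj x ∈ unobsSub n m A C := by
  rw [mem_unobsSub] at hx ⊢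
  intro k hk
  rw [(hC.mul (hA.pow k)).mulVec_swapConj, hx k hk, map_zero]

end Invariance

section DoubleVec

variable {α : Type}

def doubleVec : (α → ℂ) →ₗ[ℝ] (α ⊕ α → ℂ) where
  toFun a := Sum.elim a (star a)
  map_add' a b := by ext (i | i) <;> simp
  map_smul' c a := by ext (i | i) <;> simp

@[simp] lemma doubleVec_inl (a : α → ℂ) (i : α) : doubleVec a (Sum.inl i) = a i := rfl

@[simp] lemma doubleVec_inr (a : α → ℂ) (i : α) : doubleVec a (Sum.inr i) = star (a i) := rfl

lemma eq_doubleVec_of_swapConj_eq {x : α ⊕ α → ℂ} (hx : swapConj x = x) :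
    x = doubleVec (fun i => x (Sum.inl i)) := by
  ext (i | i)
  · rfl
  · simpa using (congrFun hx (Sum.inr i)).symm

lemma le_span_of_swapConj_fixed {R : Submodule ℂ (α ⊕ α → ℂ)} (hR : ∀ x ∈ R, swapConj x ∈ R)
    {s : Set (α ⊕ α → ℂ)} (hs : ∀ x ∈ R, swapConj x = x → x ∈ Submodule.span ℂ s) :
    R ≤ Submodule.span ℂ s := by
  intro x hx
  -- `x + σ x` and `i (x - σ x)` are `σ`-fixed, and `2 x = (x + σ x) - i (i (x - σ x))`
  have hre := hs _ (R.add_mem hx (hR x hx)) (by simp [add_comm])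
  have him := hs _ (R.smul_mem Complex.I (R.sub_mem hx (hR x hx))) (by
    rw [map_smulₛₗ, map_sub, swapConj_swapConj]
    ext
    simp only [Pi.smul_apply, Pi.sub_apply, smul_eq_mul, swapConj_apply, Complex.star_def,
      Complex.conj_I]
    ring)
  convert (Submodule.span ℂ s).smul_mem (1 / 2 : ℂ)
    ((Submodule.span ℂ s).sub_mem hre ((Submodule.span ℂ s).smul_mem Complex.I him)) using 1
  ext
  simp only [one_div, Pi.smul_apply, Pi.sub_apply, Pi.add_apply, swapConj_apply, smul_eq_mul,
    ← mul_assoc, Complex.I_mul_I, neg_mul, one_mul, neg_sub]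
  ring

lemma star_doubleVec_dotProduct_Jmat_mulVec {k : ℕ} (a b : Fin k → ℂ) :
    star (doubleVec a) ⬝ᵥ (Jmat k *ᵥ doubleVec b) = star a ⬝ᵥ b - star (star a ⬝ᵥ b) := by
  simp [dotProduct, Fintype.sum_sum_type, star_sum, mul_comm, sub_eq_add_neg]

end DoubleVec

lemma real_inner_eq_re_star_dotProduct {ι : Type} [Fintype ι] (x y : EuclideanSpace ℂ ι) :
    inner ℝ x y = (star (WithLp.ofLp x) ⬝ᵥ WithLp.ofLp y).re := by
  simp [PiLp.inner_apply, dotProduct, Complex.re_sum, Complex.inner, mul_comm]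

lemma exists_orthonormal_span_doubleVec {n : ℕ} {R : Submodule ℂ (Fin n ⊕ Fin n → ℂ)}
    (hσ : ∀ x ∈ R, swapConj x ∈ R) (hJ : ∀ u ∈ R, ∀ v ∈ R, star u ⬝ᵥ (Jmat n *ᵥ v) = 0) :
    ∃ (na : ℕ) (X : Matrix (Fin n) (Fin na) ℂ),
      Xᴴ * X = 1 ∧ Submodule.span ℂ (Set.range fun j => doubleVec (X.col j)) = R := by
  let e := WithLp.linearEquiv 2 ℝ (Fin n → ℂ)
  let V : Submodule ℝ (EuclideanSpace ℂ (Fin n)) :=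
    (R.restrictScalars ℝ).comap (doubleVec ∘ₗ e.toLinearMap)
  let b := stdOrthonormalBasis ℝ V
  let X : Matrix (Fin n) (Fin _) ℂ := Matrix.of fun i j => (b j : EuclideanSpace ℂ (Fin n)) i
  have hb (j) : doubleVec (X.col j) ∈ R := (b j).2
  refine ⟨_, X, ?_, le_antisymm (Submodule.span_le.mpr (Set.range_subset_iff.mpr hb)) ?_⟩
  · ext i j
    have hreal := hJ _ (hb i) _ (hb j)
    rw [star_doubleVec_dotProduct_Jmat_mulVec, sub_eq_zero, eq_comm] at hreal
    have hre : (star (X.col i) ⬝ᵥ X.col j).re = if i = j then 1 else 0 := by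
      rw [← orthonormal_iff_ite.mp b.orthonormal i j, Submodule.coe_inner,
        real_inner_eq_re_star_dotProduct]
      rfl
    rw [show (Xᴴ * X) i j = star (X.col i) ⬝ᵥ X.col j from rfl,
      ← Complex.conj_eq_iff_re.mp hreal, hre, one_apply]
    split_ifs <;> simp
  · refine le_span_of_swapConj_fixed hσ fun x hx hfix => ?_
    rw [eq_doubleVec_of_swapConj_eq hfix] at hx ⊢
    let v : V := ⟨WithLp.toLp 2 fun i => x (Sum.inl i), hx⟩
    change (doubleVec ∘ₗ e.toLinearMap ∘ₗ V.subtype) v ∈ _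
    rw [← b.sum_repr v, map_sum]
    refine Submodule.sum_mem _ fun j _ => ?_
    rw [map_smul]
    exact Submodule.smul_of_tower_mem _ _ (Submodule.subset_span ⟨j, rfl⟩)

lemma range_smul_fromBlocks_zero {n na : ℕ} {c : ℂ} (hc : c ≠ 0) (X : Matrix (Fin n) (Fin na) ℂ) :
    LinearMap.range
        ((c • fromBlocks X (0 : Matrix (Fin n) (Fin 0) ℂ) (mconj X) (-mconj 0)).mulVecLin) =
      Submodule.span ℂ (Set.range fun j => doubleVec (X.col j)) := by
  have hcol : (fromBlocks X (0 : Matrix (Fin n) (Fin 0) ℂ) (mconj X) (-mconj 0)).col =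
      Sum.elim (fun j => doubleVec (X.col j)) Fin.elim0 := by
    ext (j | j) (i | i) <;> first | exact j.elim0 | simp [mconj]
  rw [show (c • _ : Matrix _ _ ℂ).mulVecLin = c • _ from map_smul (mulVecBilin ℂ ℂ) c _,
    LinearMap.range_smul _ _ hc, range_mulVecLin, hcol, Set.Sum.elim_range,
    Set.range_eq_empty Fin.elim0, Set.union_empty]

theorem exists_basis_Rcnoo_Rnco_general
    (n m : ℕ)
    (Ωm Ωp : Matrix (Fin n) (Fin n) ℂ) (Cm Cp : Matrix (Fin m) (Fin n) ℂ)
    (Ω : Matrix (Fin n ⊕ Fin n) (Fin n ⊕ Fin n) ℂ) (hΩ : Ω = doubledUp Ωm Ωp)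
    (hΩH : Ω.IsHermitian)
    (𝒞 : Matrix (Fin m ⊕ Fin m) (Fin n ⊕ Fin n) ℂ) (h𝒞 : 𝒞 = doubledUp Cm Cp)
    (𝒜 : Matrix (Fin n ⊕ Fin n) (Fin n ⊕ Fin n) ℂ)
    (h𝒜 : 𝒜 = (-Complex.I) • (Jmat n * Ω) - (1 / 2 : ℂ) • (flat 𝒞 * 𝒞))
    (ℬ : Matrix (Fin n ⊕ Fin n) (Fin m ⊕ Fin m) ℂ) (hℬ : ℬ = -flat 𝒞) :
    ∃ (na nb : ℕ) (X : Matrix (Fin n) (Fin na) ℂ) (Y : Matrix (Fin n) (Fin nb) ℂ),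
      Xᴴ * X = 1 ∧ Yᴴ * Y = 1 ∧ Xᴴ * Y = 0 ∧
      LinearMap.range
          ((((Real.sqrt 2 : ℂ))⁻¹ •
            Matrix.fromBlocks X Y (mconj X) (-(mconj Y))).mulVecLin) =
        ctrbSub n m 𝒜 ℬ ⊓ unobsSub n m 𝒜 𝒞 ∧
      LinearMap.range
          ((Jmat n * ((((Real.sqrt 2 : ℂ))⁻¹ •
            Matrix.fromBlocks X Y (mconj X) (-(mconj Y))))).mulVecLin) =
        orthComp (ctrbSub n m 𝒜 ℬ) ⊓ orthComp (unobsSub n m 𝒜 𝒞) := by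
  have hΩd : IsDoubledUp Ω := hΩ ▸ isDoubledUp_doubledUp Ωm Ωp
  have hC : IsDoubledUp 𝒞 := h𝒞 ▸ isDoubledUp_doubledUp Cm Cp
  have hA : IsDoubledUp 𝒜 := h𝒜 ▸
    (hΩd.smul_Jmat_mul (by simp)).sub ((hC.flat.mul hC).smul_of_star_eq (by simp))
  have hPR := add_flat_add_flat_mul_eq_zero hΩH h𝒜
  subst hℬ
  obtain ⟨na, X, hX, hspan⟩ := exists_orthonormal_span_doubleVec
    (fun x hx => Submodule.mem_inf.mpr
      ⟨swapConj_mem_ctrbSub hA hC.flat.neg hx.1, swapConj_mem_unobsSub hA hC hx.2⟩)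
    (fun u hu v hv => star_dotProduct_Jmat_mulVec_eq_zero hPR hu.1 hv.2)
  have hrange := (range_smul_fromBlocks_zero (c := (Real.sqrt 2 : ℂ)⁻¹) (by simp) X).trans hspan
  refine ⟨na, 0, X, 0, hX, Subsingleton.elim _ _, Subsingleton.elim _ _, hrange, ?_⟩
  rw [mulVecLin_mul, LinearMap.range_comp, hrange, map_Jmat_eq_comap, Submodule.comap_inf,
    ← orthComp_ctrbSub hPR, ← orthComp_unobsSub hPR, inf_comm]

/-- **Lemma (basis of `R_cō` and `R_c̄o`).** For a general linear quantum system there exist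
`n_a, n_b ≥ 0` and `X ∈ ℂ^{n×n_a}`, `Y ∈ ℂ^{n×n_b}` with `XᴴX = I`, `YᴴY = I`, `XᴴY = 0`,
such that `T_cō = (1/√2)[X Y; conj X  -conj Y]` has column space `R_cō` and
`J_n T_cō` has column space `R_c̄o`. -/
theorem exists_basis_Rcnoo_Rnco
    (n m : ℕ) (hn : 0 < n) (hm : 0 < m)
    (Ωm Ωp : Matrix (Fin n) (Fin n) ℂ) (Cm Cp : Matrix (Fin m) (Fin n) ℂ)
    (Ω : Matrix (Fin n ⊕ Fin n) (Fin n ⊕ Fin n) ℂ) (hΩ : Ω = doubledUp Ωm Ωp)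
    (hΩH : Ω.IsHermitian)
    (𝒞 : Matrix (Fin m ⊕ Fin m) (Fin n ⊕ Fin n) ℂ) (h𝒞 : 𝒞 = doubledUp Cm Cp)
    (𝒜 : Matrix (Fin n ⊕ Fin n) (Fin n ⊕ Fin n) ℂ)
    (h𝒜 : 𝒜 = (-Complex.I) • (Jmat n * Ω) - (1 / 2 : ℂ) • (flat 𝒞 * 𝒞))
    (ℬ : Matrix (Fin n ⊕ Fin n) (Fin m ⊕ Fin m) ℂ) (hℬ : ℬ = -flat 𝒞) :
    ∃ (na nb : ℕ) (X : Matrix (Fin n) (Fin na) ℂ) (Y : Matrix (Fin n) (Fin nb) ℂ),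
      Xᴴ * X = 1 ∧ Yᴴ * Y = 1 ∧ Xᴴ * Y = 0 ∧
      LinearMap.range
          ((((Real.sqrt 2 : ℂ))⁻¹ •
            Matrix.fromBlocks X Y (mconj X) (-(mconj Y))).mulVecLin) =
        ctrbSub n m 𝒜 ℬ ⊓ unobsSub n m 𝒜 𝒞 ∧
      LinearMap.range
          ((Jmat n * ((((Real.sqrt 2 : ℂ))⁻¹ •
            Matrix.fromBlocks X Y (mconj X) (-(mconj Y))))).mulVecLin) =
        orthComp (ctrbSub n m 𝒜 ℬ) ⊓ orthComp (unobsSub n m 𝒜 𝒞) :=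
  exists_basis_Rcnoo_Rnco_general n m Ωm Ωp Cm Cp Ω hΩ hΩH 𝒞 h𝒞 𝒜 h𝒜 ℬ hℬ
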